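/- arXiv:1110.5346 — 2 statements merged into one kernel-verified Lean document; each statement's English description precedes it below -/
import Mathlib

section
/- Consider the trace regression model Yᵢ = tr(XᵢᵀA₀) + ξᵢ. On the event {λ ≥ 3‖M₁ + M₂‖∞}, the nuclear-norm penalized estimator Â^λ satisfies the cone condition ‖𝒫_{A₀}^⊥(Â^λ − A₀)‖₁ ≤ 5·‖𝒫_{A₀}(Â^λ − A₀)‖₁. -/
open MeasureTheory ProbabilityTheory Matrix Real

noncomputable section

namespace MC

instance matMeasurableSpace {m n : Type*} : MeasurableSpace (Matrix m n ℝ) :=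
  inferInstanceAs (MeasurableSpace (m → n → ℝ))

/-- Trace inner product `⟨A,B⟩ = tr(Aᵀ B)`. -/
def mip {m₁ m₂ : ℕ} (A B : Matrix (Fin m₁) (Fin m₂) ℝ) : ℝ := (Aᵀ * B).trace

/-- Frobenius norm `‖A‖₂`. -/
def frob {m₁ m₂ : ℕ} (A : Matrix (Fin m₁) (Fin m₂) ℝ) : ℝ :=
  Real.sqrt (∑ i, ∑ j, (A i j) ^ 2)

/-- Euclidean norm of a vector. -/
def evnorm {m : ℕ} (v : Fin m → ℝ) : ℝ := Real.sqrt (∑ i, (v i) ^ 2)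

/-- Spectral norm `‖A‖_∞` (largest singular value), as the `ℓ₂ → ℓ₂` operator norm. -/
def spec {m₁ m₂ : ℕ} (A : Matrix (Fin m₁) (Fin m₂) ℝ) : ℝ :=
  sSup {r | ∃ x : Fin m₂ → ℝ, evnorm x ≤ 1 ∧ r = evnorm (A.mulVec x)}

/-- Nuclear norm `‖A‖₁` (sum of singular values), via trace duality with the spectral norm. -/
def nuc {m₁ m₂ : ℕ} (A : Matrix (Fin m₁) (Fin m₂) ℝ) : ℝ :=
  sSup {r | ∃ B : Matrix (Fin m₁) (Fin m₂) ℝ, spec B ≤ 1 ∧ r = mip A B}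

/-- The matrix of the orthogonal projection onto a subspace of Euclidean space. -/
def projMat {m : ℕ} (S : Submodule ℝ (EuclideanSpace ℝ (Fin m))) :
    Matrix (Fin m) (Fin m) ℝ :=
  fun i j => (Submodule.orthogonalProjection S (EuclideanSpace.single j 1) : EuclideanSpace ℝ (Fin m)) i

/-- Column space of `A`, i.e. the span `S₁(A)` of the left singular vectors of `A`. -/
def colSpace {m₁ m₂ : ℕ} (A : Matrix (Fin m₁) (Fin m₂) ℝ) :
    Submodule ℝ (EuclideanSpace ℝ (Fin m₁)) :=
  LinearMap.range (Matrix.toEuclideanLin A)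

/-- Row space of `A`, i.e. the span `S₂(A)` of the right singular vectors of `A`. -/
def rowSpace {m₁ m₂ : ℕ} (A : Matrix (Fin m₁) (Fin m₂) ℝ) :
    Submodule ℝ (EuclideanSpace ℝ (Fin m₂)) :=
  LinearMap.range (Matrix.toEuclideanLin Aᵀ)

/-- `𝒫_A^⊥(B) = P_{S₁(A)^⊥} B P_{S₂(A)^⊥}`. -/
def calPperp {m₁ m₂ : ℕ} (A B : Matrix (Fin m₁) (Fin m₂) ℝ) : Matrix (Fin m₁) (Fin m₂) ℝ :=
  projMat (colSpace A)ᗮ * B * projMat (rowSpace A)ᗮ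

/-- `𝒫_A(B) = B - P_{S₁(A)^⊥} B P_{S₂(A)^⊥}`. -/
def calP {m₁ m₂ : ℕ} (A B : Matrix (Fin m₁) (Fin m₂) ℝ) : Matrix (Fin m₁) (Fin m₂) ℝ :=
  B - calPperp A B

/-- Entrywise expectation of a random matrix. -/
def mE {Ω : Type*} [MeasurableSpace Ω] {k l : ℕ} (μ : Measure Ω)
    (Z : Ω → Matrix (Fin k) (Fin l) ℝ) : Matrix (Fin k) (Fin l) ℝ :=
  fun i j => ∫ ω, Z ω i j ∂μ

/-- `⟨A,B⟩_{L₂(Π)} = (1/n) Σᵢ E[⟨A,Xᵢ⟩⟨B,Xᵢ⟩]`. -/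
def ipL2 {Ω : Type*} [MeasurableSpace Ω] {m₁ m₂ n : ℕ} (μ : Measure Ω)
    (X : Fin n → Ω → Matrix (Fin m₁) (Fin m₂) ℝ) (A B : Matrix (Fin m₁) (Fin m₂) ℝ) : ℝ :=
  (1 / n) * ∑ i, ∫ ω, mip A (X i ω) * mip B (X i ω) ∂μ

/-- `‖A‖²_{L₂(Π)} = (1/n) Σᵢ E[⟨A,Xᵢ⟩²]`. -/
def nl2sq {Ω : Type*} [MeasurableSpace Ω] {m₁ m₂ n : ℕ} (μ : Measure Ω)
    (X : Fin n → Ω → Matrix (Fin m₁) (Fin m₂) ℝ) (A : Matrix (Fin m₁) (Fin m₂) ℝ) : ℝ :=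
  ipL2 μ X A A

/-- `κ₁(Π) = inf{‖B‖_{L₂(Π)} : ‖B‖₂ = 1, rank(B) ≤ 1}`. -/
def kappa1 {Ω : Type*} [MeasurableSpace Ω] {m₁ m₂ n : ℕ} (μ : Measure Ω)
    (X : Fin n → Ω → Matrix (Fin m₁) (Fin m₂) ℝ) : ℝ :=
  sInf {r | ∃ B : Matrix (Fin m₁) (Fin m₂) ℝ,
    frob B = 1 ∧ B.rank ≤ 1 ∧ r = Real.sqrt (nl2sq μ X B)}

/-- The coherence `ρ(Π) = sup{|⟨A,B⟩_{L₂(Π)}| / (‖A‖₁‖B‖₁) : A,B ≠ 0, ⟨A,B⟩ = 0}`. -/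
def rho {Ω : Type*} [MeasurableSpace Ω] {m₁ m₂ n : ℕ} (μ : Measure Ω)
    (X : Fin n → Ω → Matrix (Fin m₁) (Fin m₂) ℝ) : ℝ :=
  sSup {r | ∃ A B : Matrix (Fin m₁) (Fin m₂) ℝ, A ≠ 0 ∧ B ≠ 0 ∧ mip A B = 0 ∧
    r = |ipL2 μ X A B| / (nuc A * nuc B)}

/-- The observations `Yᵢ = tr(Xᵢᵀ A₀) + ξᵢ` of the trace regression model. -/
def Yobs {Ω : Type*} {m₁ m₂ n : ℕ} (X : Fin n → Ω → Matrix (Fin m₁) (Fin m₂) ℝ)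
    (ξ : Fin n → Ω → ℝ) (A₀ : Matrix (Fin m₁) (Fin m₂) ℝ) (i : Fin n) (ω : Ω) : ℝ :=
  mip A₀ (X i ω) + ξ i ω

/-- The objective function `‖A‖²_{L₂(Π)} - ⟨(2/n) Σᵢ Yᵢ Xᵢ, A⟩ + λ ‖A‖₁` of the
nuclear-norm penalized estimator, at a realization `ω`. -/
def obj {Ω : Type*} [MeasurableSpace Ω] {m₁ m₂ n : ℕ} (μ : Measure Ω)
    (X : Fin n → Ω → Matrix (Fin m₁) (Fin m₂) ℝ) (ξ : Fin n → Ω → ℝ)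
    (A₀ : Matrix (Fin m₁) (Fin m₂) ℝ) (lam : ℝ) (ω : Ω)
    (A : Matrix (Fin m₁) (Fin m₂) ℝ) : ℝ :=
  nl2sq μ X A - mip ((2 / (n : ℝ)) • ∑ i, Yobs X ξ A₀ i ω • X i ω) A + lam * nuc A

/-- The stochastic error matrix `M₁ = (1/n) Σᵢ ξᵢ Xᵢ`. -/
def M1 {Ω : Type*} {m₁ m₂ n : ℕ} (X : Fin n → Ω → Matrix (Fin m₁) (Fin m₂) ℝ)
    (ξ : Fin n → Ω → ℝ) (ω : Ω) : Matrix (Fin m₁) (Fin m₂) ℝ :=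
  (1 / (n : ℝ)) • ∑ i, ξ i ω • X i ω

/-- The stochastic error matrix `M₂ = (1/n) Σᵢ (⟨A₀,Xᵢ⟩Xᵢ - E[⟨A₀,Xᵢ⟩Xᵢ])`. -/
def M2 {Ω : Type*} [MeasurableSpace Ω] {m₁ m₂ n : ℕ} (μ : Measure Ω)
    (X : Fin n → Ω → Matrix (Fin m₁) (Fin m₂) ℝ) (A₀ : Matrix (Fin m₁) (Fin m₂) ℝ)
    (ω : Ω) : Matrix (Fin m₁) (Fin m₂) ℝ :=
  (1 / (n : ℝ)) • ∑ i, (mip A₀ (X i ω) • X i ω - mE μ (fun ω' => mip A₀ (X i ω') • X i ω'))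

/-!
For `Δ = Â - A₀`, comparing the objective at `Â` with its value at `A₀` gives the basic inequality
`λ (‖A₀ + Δ‖₁ - ‖A₀‖₁) ≤ 2⟨M₁ + M₂, Δ⟩ - ‖Δ‖²_{L₂(Π)} ≤ 2‖M₁ + M₂‖∞ ‖Δ‖₁ ≤ (2λ/3) ‖Δ‖₁`.
The nuclear norm is decomposable: a dual certificate for `A₀`, compressed to the block
`P_{S₁} · P_{S₂}`, plus one for `𝒫_{A₀}^⊥ Δ`, compressed to `P_{S₁^⊥} · P_{S₂^⊥}`, is still a
contraction, so `‖A₀ + 𝒫_{A₀}^⊥ Δ‖₁ = ‖A₀‖₁ + ‖𝒫_{A₀}^⊥ Δ‖₁`, whence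
`‖A₀ + Δ‖₁ ≥ ‖A₀‖₁ + ‖𝒫_{A₀}^⊥ Δ‖₁ - ‖𝒫_{A₀} Δ‖₁`. Together with
`‖Δ‖₁ ≤ ‖𝒫_{A₀} Δ‖₁ + ‖𝒫_{A₀}^⊥ Δ‖₁` this leaves `‖𝒫_{A₀}^⊥ Δ‖₁ ≤ 5 ‖𝒫_{A₀} Δ‖₁`.
-/

section Sandwich

variable {E F : Type*} [NormedAddCommGroup E] [InnerProductSpace ℝ E] [NormedAddCommGroup F]
  [InnerProductSpace ℝ F]

lemma norm_starProjection_apply_le_of_opNorm_le_one (K : Submodule ℝ E)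
    [K.HasOrthogonalProjection] {T : F →L[ℝ] E} (hT : ‖T‖ ≤ 1) (y : F) :
    ‖K.starProjection (T y)‖ ≤ ‖y‖ :=
  (K.norm_starProjection_apply_le _).trans (T.le_of_opNorm_le hT y |>.trans_eq (one_mul _))

lemma norm_starProjection_sandwich_add_le (K : Submodule ℝ E) (L : Submodule ℝ F)
    [K.HasOrthogonalProjection] [L.HasOrthogonalProjection] {T₁ T₂ : F →L[ℝ] E}
    (h₁ : ‖T₁‖ ≤ 1) (h₂ : ‖T₂‖ ≤ 1) :
    ‖K.starProjection ∘L T₁ ∘L L.starProjection +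
      Kᗮ.starProjection ∘L T₂ ∘L Lᗮ.starProjection‖ ≤ 1 := by
  refine ContinuousLinearMap.opNorm_le_bound _ zero_le_one fun x => ?_
  set u := K.starProjection (T₁ (L.starProjection x))
  set w := Kᗮ.starProjection (T₂ (Lᗮ.starProjection x))
  have hperp : inner ℝ u w = 0 :=
    K.inner_right_of_mem_orthogonal (K.starProjection_apply_mem _) (Kᗮ.starProjection_apply_mem _)
  rw [one_mul, ← sq_le_sq₀ (norm_nonneg _) (norm_nonneg _)]
  calc ‖u + w‖ ^ 2 = ‖u‖ ^ 2 + ‖w‖ ^ 2 := by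
        rw [sq, sq, sq, norm_add_sq_eq_norm_sq_add_norm_sq_real hperp]
    _ ≤ ‖L.starProjection x‖ ^ 2 + ‖Lᗮ.starProjection x‖ ^ 2 := by
        gcongr
        exacts [norm_starProjection_apply_le_of_opNorm_le_one K h₁ _,
          norm_starProjection_apply_le_of_opNorm_le_one Kᗮ h₂ _]
    _ = ‖x‖ ^ 2 := (L.norm_sq_eq_add_norm_sq_starProjection x).symm

end Sandwich

section TraceInner

variable {m₁ m₂ : ℕ}

def mipₗ : Matrix (Fin m₁) (Fin m₂) ℝ →ₗ[ℝ] Matrix (Fin m₁) (Fin m₂) ℝ →ₗ[ℝ] ℝ :=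
  LinearMap.mk₂ ℝ mip (by simp [mip, Matrix.add_mul]) (by simp [mip])
    (by simp [mip, Matrix.mul_add]) (by simp [mip])

lemma mip_zero_left (B : Matrix (Fin m₁) (Fin m₂) ℝ) : mip 0 B = 0 :=
  mipₗ.map_zero₂ B

lemma mip_add_left (A B C : Matrix (Fin m₁) (Fin m₂) ℝ) : mip (A + B) C = mip A C + mip B C :=
  mipₗ.map_add₂ A B C

lemma mip_add_right (A B C : Matrix (Fin m₁) (Fin m₂) ℝ) : mip A (B + C) = mip A B + mip A C :=
  (mipₗ A).map_add B C

lemma mip_sub_left (A B C : Matrix (Fin m₁) (Fin m₂) ℝ) : mip (A - B) C = mip A C - mip B C :=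
  mipₗ.map_sub₂ A B C

lemma mip_neg_left (A B : Matrix (Fin m₁) (Fin m₂) ℝ) : mip (-A) B = -mip A B :=
  mipₗ.map_neg₂ A B

lemma mip_neg_right (A B : Matrix (Fin m₁) (Fin m₂) ℝ) : mip A (-B) = -mip A B :=
  (mipₗ A).map_neg B

lemma mip_smul_left (c : ℝ) (A B : Matrix (Fin m₁) (Fin m₂) ℝ) : mip (c • A) B = c * mip A B :=
  mipₗ.map_smul₂ c A B

lemma mip_smul_right (c : ℝ) (A B : Matrix (Fin m₁) (Fin m₂) ℝ) : mip A (c • B) = c * mip A B :=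
  (mipₗ A).map_smul c B

lemma mip_sum_left {ι : Type*} (s : Finset ι) (A : ι → Matrix (Fin m₁) (Fin m₂) ℝ)
    (B : Matrix (Fin m₁) (Fin m₂) ℝ) : mip (∑ i ∈ s, A i) B = ∑ i ∈ s, mip (A i) B :=
  mipₗ.map_sum₂ s A B

lemma mip_comm (A B : Matrix (Fin m₁) (Fin m₂) ℝ) : mip A B = mip B A := by
  rw [mip, ← Matrix.trace_transpose, Matrix.transpose_mul, Matrix.transpose_transpose, mip]

lemma mip_eq_sum (A B : Matrix (Fin m₁) (Fin m₂) ℝ) :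
    mip A B = ∑ i, ∑ j, A i j * B i j := by
  simp only [mip, Matrix.trace, Matrix.diag, Matrix.mul_apply, Matrix.transpose_apply]
  exact Finset.sum_comm

lemma mip_single_left (i : Fin m₁) (j : Fin m₂) (A : Matrix (Fin m₁) (Fin m₂) ℝ) :
    mip (Matrix.single i j 1) A = A i j := by
  simp [mip_eq_sum, Matrix.single_apply, ite_and]

lemma mip_mul_mul_right (A C : Matrix (Fin m₁) (Fin m₂) ℝ) (P : Matrix (Fin m₁) (Fin m₁) ℝ)
    (Q : Matrix (Fin m₂) (Fin m₂) ℝ) :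
    mip A (P * C * Q) = mip (Pᵀ * A * Qᵀ) C := by
  simp only [mip, Matrix.transpose_mul, Matrix.transpose_transpose, Matrix.mul_assoc]
  rw [Matrix.trace_mul_comm Q]
  simp only [Matrix.mul_assoc]

end TraceInner

section Projection

variable {m m₁ m₂ : ℕ}

lemma toEuclideanLin_projMat (S : Submodule ℝ (EuclideanSpace ℝ (Fin m))) :
    Matrix.toEuclideanLin (projMat S) = S.starProjection.toLinearMap := by
  refine (EuclideanSpace.basisFun (Fin m) ℝ).toBasis.ext fun j => ?_
  ext i
  simp [Matrix.toLpLin_apply, Matrix.mulVec_single, projMat]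

lemma projMat_mul_self (S : Submodule ℝ (EuclideanSpace ℝ (Fin m))) :
    projMat S * projMat S = projMat S := by
  apply Matrix.toEuclideanLin.injective
  ext x : 1
  simpa [Matrix.toLpLin_mul_same, toEuclideanLin_projMat] using
    Submodule.starProjection_eq_self_iff.mpr (S.starProjection_apply_mem x)

lemma projMat_orthogonal_mul_projMat (S : Submodule ℝ (EuclideanSpace ℝ (Fin m))) :
    projMat Sᗮ * projMat S = 0 := by
  apply Matrix.toEuclideanLin.injective
  ext x : 1
  simpa [Matrix.toLpLin_mul_same, toEuclideanLin_projMat, sub_eq_zero] using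
    (Submodule.starProjection_eq_self_iff.mpr (S.starProjection_apply_mem x)).symm

lemma projMat_mul_projMat_orthogonal (S : Submodule ℝ (EuclideanSpace ℝ (Fin m))) :
    projMat S * projMat Sᗮ = 0 := by
  apply Matrix.toEuclideanLin.injective
  ext x : 1
  simpa [Matrix.toLpLin_mul_same, toEuclideanLin_projMat, sub_eq_zero] using
    (Submodule.starProjection_eq_self_iff.mpr (S.starProjection_apply_mem x)).symm

lemma projMat_colSpace_mul (A : Matrix (Fin m₁) (Fin m₂) ℝ) :
    projMat (colSpace A) * A = A := by
  apply Matrix.toEuclideanLin.injective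
  ext x : 1
  simpa [Matrix.toLpLin_mul_same, toEuclideanLin_projMat, colSpace] using
    Submodule.starProjection_eq_self_iff.mpr (LinearMap.mem_range_self _ _)

lemma projMat_transpose (S : Submodule ℝ (EuclideanSpace ℝ (Fin m))) :
    (projMat S)ᵀ = projMat S := by
  rw [← Matrix.conjTranspose_eq_transpose_of_trivial]
  apply Matrix.toEuclideanLin.injective
  rw [Matrix.toEuclideanLin_conjTranspose_eq_adjoint, toEuclideanLin_projMat]
  exact S.starProjection_isSymmetric.adjoint_eq

lemma mul_projMat_rowSpace (A : Matrix (Fin m₁) (Fin m₂) ℝ) :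
    A * projMat (rowSpace A) = A := by
  rw [show rowSpace A = colSpace Aᵀ from rfl]
  simpa [projMat_transpose] using congrArg Matrix.transpose (projMat_colSpace_mul Aᵀ)

end Projection

section OperatorNorm

open scoped Matrix.Norms.L2Operator

variable {m m₁ m₂ : ℕ}

lemma evnorm_eq_norm (x : Fin m → ℝ) : evnorm x = ‖WithLp.toLp 2 x‖ := by
  simp [evnorm, EuclideanSpace.norm_eq]

lemma spec_eq_l2_opNorm (A : Matrix (Fin m₁) (Fin m₂) ℝ) : spec A = ‖A‖ := by
  rw [Matrix.l2_opNorm_def, ← ContinuousLinearMap.sSup_unitClosedBall_eq_norm, spec]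
  congr 1
  ext r
  constructor
  · rintro ⟨x, hx, rfl⟩
    exact ⟨WithLp.toLp 2 x, by simpa [evnorm_eq_norm] using hx, by simp [evnorm_eq_norm]⟩
  · rintro ⟨y, hy, rfl⟩
    exact ⟨y.ofLp, by simpa [evnorm_eq_norm] using hy, by simp [evnorm_eq_norm]; rfl⟩

lemma abs_apply_le_l2_opNorm (B : Matrix (Fin m₁) (Fin m₂) ℝ) (i : Fin m₁) (j : Fin m₂) :
    |B i j| ≤ ‖B‖ := by
  simpa [Matrix.mulVec_single] using
    (PiLp.norm_apply_le _ i).trans (B.l2_opNorm_mulVec (EuclideanSpace.single j 1))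

lemma nuc_eq_sSup (A : Matrix (Fin m₁) (Fin m₂) ℝ) :
    nuc A = sSup ((mip A) '' {B | ‖B‖ ≤ 1}) := by
  simp only [nuc, spec_eq_l2_opNorm]
  congr 1
  ext r
  simp [eq_comm]

lemma bddAbove_mip_image_unitBall (A : Matrix (Fin m₁) (Fin m₂) ℝ) :
    BddAbove ((mip A) '' {B | ‖B‖ ≤ 1}) := by
  refine ⟨∑ i, ∑ j, |A i j|, ?_⟩
  rintro - ⟨B, hB, rfl⟩
  rw [mip_eq_sum]
  gcongr with i _ j _
  calc A i j * B i j ≤ |A i j| * |B i j| := by rw [← abs_mul]; exact le_abs_self _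
    _ ≤ |A i j| := mul_le_of_le_one_right (abs_nonneg _)
        ((abs_apply_le_l2_opNorm B i j).trans hB)

lemma mip_le_nuc (A : Matrix (Fin m₁) (Fin m₂) ℝ) {B : Matrix (Fin m₁) (Fin m₂) ℝ}
    (hB : ‖B‖ ≤ 1) : mip A B ≤ nuc A :=
  nuc_eq_sSup A ▸ le_csSup (bddAbove_mip_image_unitBall A) ⟨B, hB, rfl⟩

lemma nuc_le_of_forall_mip_le {A : Matrix (Fin m₁) (Fin m₂) ℝ} {c : ℝ}
    (h : ∀ B : Matrix (Fin m₁) (Fin m₂) ℝ, ‖B‖ ≤ 1 → mip A B ≤ c) : nuc A ≤ c := by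
  rw [nuc_eq_sSup]
  exact csSup_le ⟨_, 0, by simp, rfl⟩ (by rintro - ⟨B, hB, rfl⟩; exact h B hB)

lemma exists_lt_mip_of_lt_nuc {A : Matrix (Fin m₁) (Fin m₂) ℝ} {c : ℝ} (hc : c < nuc A) :
    ∃ B : Matrix (Fin m₁) (Fin m₂) ℝ, ‖B‖ ≤ 1 ∧ c < mip A B := by
  rw [nuc_eq_sSup] at hc
  obtain ⟨-, ⟨B, hB, rfl⟩, hlt⟩ :=
    exists_lt_of_lt_csSup (Set.Nonempty.image _ ⟨0, by simp⟩) hc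
  exact ⟨B, hB, hlt⟩

lemma nuc_add_le (A B : Matrix (Fin m₁) (Fin m₂) ℝ) : nuc (A + B) ≤ nuc A + nuc B :=
  nuc_le_of_forall_mip_le fun C hC => by
    rw [mip_add_left]
    exact add_le_add (mip_le_nuc A hC) (mip_le_nuc B hC)

lemma nuc_neg (A : Matrix (Fin m₁) (Fin m₂) ℝ) : nuc (-A) = nuc A := by
  have nuc_neg_le (A : Matrix (Fin m₁) (Fin m₂) ℝ) : nuc (-A) ≤ nuc A :=
    nuc_le_of_forall_mip_le fun B hB => by
      simpa [mip_neg_left, mip_neg_right] using mip_le_nuc A (B := -B) (by rwa [norm_neg])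
  exact le_antisymm (nuc_neg_le A) (by simpa using nuc_neg_le (-A))

lemma nuc_nonneg (A : Matrix (Fin m₁) (Fin m₂) ℝ) : 0 ≤ nuc A := by
  simpa [mip_comm A, mip_zero_left] using mip_le_nuc A (B := 0) (by simp)

lemma mip_le_spec_mul_nuc (M A : Matrix (Fin m₁) (Fin m₂) ℝ) : mip M A ≤ spec M * nuc A := by
  rw [spec_eq_l2_opNorm]
  rcases eq_or_ne M 0 with rfl | hM
  · simp [mip_zero_left]
  have hunit : ‖‖M‖⁻¹ • M‖ ≤ 1 := (norm_smul_inv_norm hM).le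
  calc mip M A = ‖M‖ * mip A (‖M‖⁻¹ • M) := by
        rw [mip_comm, mip_smul_right, ← mul_assoc, mul_inv_cancel₀ (norm_ne_zero_iff.mpr hM),
          one_mul]
    _ ≤ ‖M‖ * nuc A := mul_le_mul_of_nonneg_left (mip_le_nuc A hunit) (norm_nonneg M)

lemma l2_opNorm_projMat_sandwich_add_le (S₁ : Submodule ℝ (EuclideanSpace ℝ (Fin m₁)))
    (S₂ : Submodule ℝ (EuclideanSpace ℝ (Fin m₂))) {B₁ B₂ : Matrix (Fin m₁) (Fin m₂) ℝ}
    (h₁ : ‖B₁‖ ≤ 1) (h₂ : ‖B₂‖ ≤ 1) :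
    ‖projMat S₁ * B₁ * projMat S₂ + projMat S₁ᗮ * B₂ * projMat S₂ᗮ‖ ≤ 1 := by
  rw [Matrix.l2_opNorm_def] at *
  convert norm_starProjection_sandwich_add_le S₁ S₂ h₁ h₂ using 2
  ext x : 1
  simp [Matrix.toLpLin_mul_same, toEuclideanLin_projMat]

lemma le_nuc_add_of_orthogonal_supports (S₁ : Submodule ℝ (EuclideanSpace ℝ (Fin m₁)))
    (S₂ : Submodule ℝ (EuclideanSpace ℝ (Fin m₂))) {A N : Matrix (Fin m₁) (Fin m₂) ℝ}
    (hA : projMat S₁ * A * projMat S₂ = A) (hN : projMat S₁ᗮ * N * projMat S₂ᗮ = N) :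
    nuc A + nuc N ≤ nuc (A + N) := by
  have hA' : projMat S₁ᗮ * A * projMat S₂ᗮ = 0 := by
    rw [← hA]
    simp only [← Matrix.mul_assoc, projMat_orthogonal_mul_projMat, Matrix.zero_mul]
  have hN' : projMat S₁ * N * projMat S₂ = 0 := by
    rw [← hN]
    simp only [← Matrix.mul_assoc, projMat_mul_projMat_orthogonal, Matrix.zero_mul]
  refine le_of_forall_pos_le_add fun ε hε => ?_
  obtain ⟨B₁, hB₁, hAB₁⟩ := exists_lt_mip_of_lt_nuc (sub_lt_self (nuc A) (half_pos hε))
  obtain ⟨B₂, hB₂, hNB₂⟩ := exists_lt_mip_of_lt_nuc (sub_lt_self (nuc N) (half_pos hε))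
  have hmip : mip (A + N) (projMat S₁ * B₁ * projMat S₂ + projMat S₁ᗮ * B₂ * projMat S₂ᗮ)
      = mip A B₁ + mip N B₂ := by
    simp only [mip_add_right, mip_mul_mul_right, projMat_transpose, Matrix.mul_add, Matrix.add_mul,
      hA, hA', hN, hN', add_zero, zero_add]
  linarith [mip_le_nuc (A + N) (l2_opNorm_projMat_sandwich_add_le S₁ S₂ hB₁ hB₂)]

lemma calP_add_calPperp (A B : Matrix (Fin m₁) (Fin m₂) ℝ) : calP A B + calPperp A B = B :=
  sub_add_cancel B _

lemma nuc_add_nuc_calPperp_le (A₀ Δ : Matrix (Fin m₁) (Fin m₂) ℝ) :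
    nuc A₀ + nuc (calPperp A₀ Δ) ≤ nuc (A₀ + calPperp A₀ Δ) :=
  le_nuc_add_of_orthogonal_supports _ _ (by rw [projMat_colSpace_mul, mul_projMat_rowSpace])
    (by simp only [calPperp, ← Matrix.mul_assoc, projMat_mul_self]
        simp only [Matrix.mul_assoc, projMat_mul_self])

lemma nuc_add_nuc_calPperp_sub_nuc_calP_le (A₀ Δ : Matrix (Fin m₁) (Fin m₂) ℝ) :
    nuc A₀ + nuc (calPperp A₀ Δ) - nuc (calP A₀ Δ) ≤ nuc (A₀ + Δ) := by
  have h := nuc_add_le (A₀ + Δ) (-calP A₀ Δ)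
  rw [nuc_neg, show A₀ + Δ + -calP A₀ Δ = A₀ + calPperp A₀ Δ by
    rw [calP]; abel] at h
  linarith [nuc_add_nuc_calPperp_le A₀ Δ]

end OperatorNorm

section Objective

variable {Ω : Type*} [MeasurableSpace Ω] (μ : Measure Ω) {m₁ m₂ n : ℕ}
  (X : Fin n → Ω → Matrix (Fin m₁) (Fin m₂) ℝ)

def HasSecondMoments : Prop :=
  ∀ (i : Fin n) (A B : Matrix (Fin m₁) (Fin m₂) ℝ),
    Integrable (fun ω => mip A (X i ω) * mip B (X i ω)) μ

lemma mip_mE_left {Z : Ω → Matrix (Fin m₁) (Fin m₂) ℝ}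
    (hZ : ∀ i j, Integrable (fun ω => Z ω i j) μ) (A : Matrix (Fin m₁) (Fin m₂) ℝ) :
    mip (mE μ Z) A = ∫ ω, mip (Z ω) A ∂μ := by
  have hZA (i j) : Integrable (fun ω => Z ω i j * A i j) μ := (hZ i j).mul_const _
  calc mip (mE μ Z) A = ∑ i, ∑ j, ∫ ω, Z ω i j * A i j ∂μ := by
        simp [mip_eq_sum, mE, integral_mul_const]
    _ = ∫ ω, mip (Z ω) A ∂μ := by
        simp only [mip_eq_sum]
        rw [integral_finsetSum _ fun i _ => integrable_finsetSum _ fun j _ => hZA i j]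
        exact Finset.sum_congr rfl fun i _ => (integral_finsetSum _ fun j _ => hZA i j).symm

variable {μ X}

lemma ipL2_comm (A B : Matrix (Fin m₁) (Fin m₂) ℝ) : ipL2 μ X A B = ipL2 μ X B A := by
  simp only [ipL2, mul_comm (mip A _)]

lemma ipL2_add_right (hX : HasSecondMoments μ X) (A B C : Matrix (Fin m₁) (Fin m₂) ℝ) :
    ipL2 μ X A (B + C) = ipL2 μ X A B + ipL2 μ X A C := by
  simp only [ipL2, ← mul_add, ← Finset.sum_add_distrib]
  congr 1
  refine Finset.sum_congr rfl fun i _ => ?_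
  rw [← integral_add (hX i A B) (hX i A C)]
  simp only [mip_add_left, mul_add]

lemma nl2sq_add (hX : HasSecondMoments μ X) (A B : Matrix (Fin m₁) (Fin m₂) ℝ) :
    nl2sq μ X (A + B) = nl2sq μ X A + 2 * ipL2 μ X A B + nl2sq μ X B := by
  simp only [nl2sq, ipL2_add_right hX, ipL2_comm (A + B), ipL2_comm B A]
  ring

lemma nl2sq_nonneg (A : Matrix (Fin m₁) (Fin m₂) ℝ) : 0 ≤ nl2sq μ X A :=
  mul_nonneg (by positivity) <| Finset.sum_nonneg fun _ _ =>
    integral_nonneg fun _ => mul_self_nonneg _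

lemma mip_mE_mip_smul (hX : HasSecondMoments μ X) (i : Fin n)
    (A₀ A : Matrix (Fin m₁) (Fin m₂) ℝ) :
    mip (mE μ fun ω => mip A₀ (X i ω) • X i ω) A = ∫ ω, mip A₀ (X i ω) * mip A (X i ω) ∂μ := by
  rw [mip_mE_left μ fun a b => by simpa [mip_single_left] using hX i A₀ (Matrix.single a b 1)]
  congr with ω
  rw [mip_smul_left, mip_comm (X i ω) A]

lemma mip_empirical (hX : HasSecondMoments μ X) (ξ : Fin n → Ω → ℝ)
    (A₀ : Matrix (Fin m₁) (Fin m₂) ℝ) (ω : Ω) (A : Matrix (Fin m₁) (Fin m₂) ℝ) :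
    mip ((2 / (n : ℝ)) • ∑ i, Yobs X ξ A₀ i ω • X i ω) A
      = 2 * mip (M1 X ξ ω + M2 μ X A₀ ω) A + 2 * ipL2 μ X A₀ A := by
  simp only [M1, M2, ipL2, Yobs, mip_add_left, mip_sub_left, mip_smul_left, mip_sum_left,
    mip_mE_mip_smul hX]
  simp only [add_mul, Finset.sum_add_distrib, Finset.sum_sub_distrib]
  ring

lemma obj_add_sub_obj (hX : HasSecondMoments μ X) (ξ : Fin n → Ω → ℝ)
    (A₀ : Matrix (Fin m₁) (Fin m₂) ℝ) (lam : ℝ) (ω : Ω) (Δ : Matrix (Fin m₁) (Fin m₂) ℝ) :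
    obj μ X ξ A₀ lam ω (A₀ + Δ) - obj μ X ξ A₀ lam ω A₀
      = nl2sq μ X Δ - 2 * mip (M1 X ξ ω + M2 μ X A₀ ω) Δ + lam * (nuc (A₀ + Δ) - nuc A₀) := by
  simp only [obj, mip_empirical hX, nl2sq_add hX, ipL2_add_right hX, mip_add_right]
  simp only [nl2sq]
  ring

end Objective

theorem cone_condition_general {m₁ m₂ n : ℕ}
    {Ω : Type*} [MeasurableSpace Ω] (μ : Measure Ω)
    (X : Fin n → Ω → Matrix (Fin m₁) (Fin m₂) ℝ) (ξ : Fin n → Ω → ℝ)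
    (hInt : ∀ (i : Fin n) (A B : Matrix (Fin m₁) (Fin m₂) ℝ),
      Integrable (fun ω => mip A (X i ω) * mip B (X i ω)) μ)
    (A₀ : Matrix (Fin m₁) (Fin m₂) ℝ)
    (lam : ℝ) (hlam : 0 < lam)
    (Ahat : Ω → Matrix (Fin m₁) (Fin m₂) ℝ)
    (hmin : ∀ ω (A : Matrix (Fin m₁) (Fin m₂) ℝ),
      obj μ X ξ A₀ lam ω (Ahat ω) ≤ obj μ X ξ A₀ lam ω A)
    (ω : Ω) (hevent : 3 * spec (M1 X ξ ω + M2 μ X A₀ ω) ≤ lam) :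
    nuc (calPperp A₀ (Ahat ω - A₀)) ≤ 5 * nuc (calP A₀ (Ahat ω - A₀)) := by
  have hAhat : A₀ + (Ahat ω - A₀) = Ahat ω := add_sub_cancel A₀ (Ahat ω)
  set Δ := Ahat ω - A₀
  set M := M1 X ξ ω + M2 μ X A₀ ω
  have hbasic : lam * (nuc (A₀ + Δ) - nuc A₀) ≤ 2 * mip M Δ := by
    have hopt : obj μ X ξ A₀ lam ω (A₀ + Δ) ≤ obj μ X ξ A₀ lam ω A₀ := hAhat ▸ hmin ω A₀
    linarith [obj_add_sub_obj hInt ξ A₀ lam ω Δ, nl2sq_nonneg (μ := μ) (X := X) Δ]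
  have hsplit : nuc Δ ≤ nuc (calP A₀ Δ) + nuc (calPperp A₀ Δ) := by
    simpa only [calP_add_calPperp] using nuc_add_le (calP A₀ Δ) (calPperp A₀ Δ)
  have hnoise : mip M Δ ≤ lam / 3 * (nuc (calP A₀ Δ) + nuc (calPperp A₀ Δ)) :=
    (mip_le_spec_mul_nuc M Δ).trans <|
      mul_le_mul (by linarith) hsplit (nuc_nonneg Δ) (by positivity)
  have hdecomp := mul_le_mul_of_nonneg_left (nuc_add_nuc_calPperp_sub_nuc_calP_le A₀ Δ) hlam.le
  refine le_of_mul_le_mul_left ?_ hlam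
  linarith

/-- Lemma 1: on the event `λ ≥ 3‖M₁ + M₂‖_∞` the nuclear-norm penalized
estimator satisfies the cone condition
`‖𝒫_{A₀}^⊥(Â^λ - A₀)‖₁ ≤ 5 ‖𝒫_{A₀}(Â^λ - A₀)‖₁`. -/
theorem cone_condition {m₁ m₂ n : ℕ} (hn : 0 < n)
    {Ω : Type*} [MeasurableSpace Ω] (μ : Measure Ω) [IsProbabilityMeasure μ]
    (X : Fin n → Ω → Matrix (Fin m₁) (Fin m₂) ℝ) (ξ : Fin n → Ω → ℝ)
    (hmeasX : ∀ i, Measurable (X i)) (hmeasξ : ∀ i, Measurable (ξ i))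
    (hInt : ∀ (i : Fin n) (A B : Matrix (Fin m₁) (Fin m₂) ℝ),
      Integrable (fun ω => mip A (X i ω) * mip B (X i ω)) μ)
    (hξmean : ∀ i, ∫ ω, ξ i ω ∂μ = 0)
    (A₀ : Matrix (Fin m₁) (Fin m₂) ℝ)
    (lam : ℝ) (hlam : 0 < lam)
    (Ahat : Ω → Matrix (Fin m₁) (Fin m₂) ℝ)
    (hmin : ∀ ω (A : Matrix (Fin m₁) (Fin m₂) ℝ),
      obj μ X ξ A₀ lam ω (Ahat ω) ≤ obj μ X ξ A₀ lam ω A)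
    (ω : Ω) (hevent : 3 * spec (M1 X ξ ω + M2 μ X A₀ ω) ≤ lam) :
    nuc (calPperp A₀ (Ahat ω - A₀)) ≤ 5 * nuc (calP A₀ (Ahat ω - A₀)) :=
  cone_condition_general μ X ξ hInt A₀ lam hlam Ahat hmin ω hevent

end MC
end
end

section
/- Let X have distribution Π on the matrix completion basis 𝒳 with √(c₁/(m₁m₂)) ≤ κ₁ ≤ κ₁' ≤ √(c₁'/(m₁m₂)). Then max{‖E(X)‖∞, ‖E(X)ᵀ‖∞} ≤ √(c₁'/(m₁m₂)), and the quantity σ_X² = max{‖E(XXᵀ)‖∞, ‖E(XᵀX)‖∞} satisfies c₁/(m₁∧m₂) ≤ σ_X² ≤ c₁'/(m₁∧m₂). -/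
/-! Since `X` lives on the basis, `‖e_j e_kᵀ‖²_{L₂(Π)} = π_{jk} := Π{e_j e_kᵀ}`, and these
unit-norm rank-one matrices show that every `π_{jk}` lies between `κ₁² ≥ c₁/(m₁m₂)` and
`κ₁'² ≤ c₁'/(m₁m₂)`. Now `E(X) = (π_{jk})` has spectral norm at most its Frobenius norm
`√(∑ π_{jk}²) ≤ √(max π_{jk})`, while `E(XXᵀ)` and `E(XᵀX)` are the diagonal matrices of row and
column sums of `π`, whose spectral norms are their largest entries; a row sum then lies in
`[c₁/m₁, c₁'/m₁]` and a column sum in `[c₁/m₂, c₁'/m₂]`. -/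

open MeasureTheory ProbabilityTheory Matrix Real

noncomputable section

namespace MC

/-- The matrix completion basis `𝒳 = {e_j(m₁) e_k(m₂)ᵀ}`. -/
def mcBasis (m₁ m₂ : ℕ) : Set (Matrix (Fin m₁) (Fin m₂) ℝ) :=
  {M | ∃ j k, M = Matrix.single j k (1 : ℝ)}

/-- `⟨A,B⟩_{L₂(Pdist)} = E[⟨A,X⟩⟨B,X⟩]` for `X ~ Pdist`. -/
def ipL2Pi {m₁ m₂ : ℕ} (Pdist : Measure (Matrix (Fin m₁) (Fin m₂) ℝ))
    (A B : Matrix (Fin m₁) (Fin m₂) ℝ) : ℝ :=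
  ∫ M, mip A M * mip B M ∂Pdist

/-- `‖A‖²_{L₂(Pdist)} = E[⟨A,X⟩²]` for `X ~ Pdist`. -/
def nl2sqPi {m₁ m₂ : ℕ} (Pdist : Measure (Matrix (Fin m₁) (Fin m₂) ℝ))
    (A : Matrix (Fin m₁) (Fin m₂) ℝ) : ℝ :=
  ipL2Pi Pdist A A

/-- `κ₁(Pdist) = inf{‖B‖_{L₂(Pdist)} : ‖B‖₂ = 1, rank(B) ≤ 1}`. -/
def kappa1Pi {m₁ m₂ : ℕ} (Pdist : Measure (Matrix (Fin m₁) (Fin m₂) ℝ)) : ℝ :=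
  sInf {r | ∃ B : Matrix (Fin m₁) (Fin m₂) ℝ,
    frob B = 1 ∧ B.rank ≤ 1 ∧ r = Real.sqrt (nl2sqPi Pdist B)}

/-- `κ₁'(Pdist) = sup{‖B‖_{L₂(Pdist)} : ‖B‖₂ = 1, rank(B) ≤ 1}`. -/
def kappa1'Pi {m₁ m₂ : ℕ} (Pdist : Measure (Matrix (Fin m₁) (Fin m₂) ℝ)) : ℝ :=
  sSup {r | ∃ B : Matrix (Fin m₁) (Fin m₂) ℝ,
    frob B = 1 ∧ B.rank ≤ 1 ∧ r = Real.sqrt (nl2sqPi Pdist B)}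

/-- The coherence `ρ(Pdist)`. -/
def rhoPi {m₁ m₂ : ℕ} (Pdist : Measure (Matrix (Fin m₁) (Fin m₂) ℝ)) : ℝ :=
  sSup {r | ∃ A B : Matrix (Fin m₁) (Fin m₂) ℝ, A ≠ 0 ∧ B ≠ 0 ∧ mip A B = 0 ∧
    r = |ipL2Pi Pdist A B| / (nuc A * nuc B)}

/-- Entrywise expectation `E[f(X)]` for `X ~ Pdist`. -/
def mEPi {m₁ m₂ k l : ℕ} (Pdist : Measure (Matrix (Fin m₁) (Fin m₂) ℝ))
    (f : Matrix (Fin m₁) (Fin m₂) ℝ → Matrix (Fin k) (Fin l) ℝ) : Matrix (Fin k) (Fin l) ℝ :=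
  fun i j => ∫ M, f M i j ∂Pdist

instance matMeasurableSingletonClass {m n : Type*} [Countable m] [Countable n] :
    MeasurableSingletonClass (Matrix m n ℝ) :=
  inferInstanceAs (MeasurableSingletonClass (m → n → ℝ))

lemma integral_eq_sum_of_ae_mem_finset {X E : Type*} [MeasurableSpace X]
    [MeasurableSingletonClass X] [NormedAddCommGroup E] [NormedSpace ℝ E] [CompleteSpace E]
    {μ : Measure X} [IsFiniteMeasure μ] {s : Finset X} (hs : ∀ᵐ x ∂μ, x ∈ s) (f : X → E) :
    ∫ x, f x ∂μ = ∑ x ∈ s, μ.real {x} • f x := by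
  rw [← setIntegral_eq_integral_of_ae_compl_eq_zero (hs.mono fun x hx hx' => absurd hx hx')]
  exact setIntegral_finset s IntegrableOn.finset

section SpectralNorm

variable {m n : ℕ}

lemma frob_nonneg (A : Matrix (Fin m) (Fin n) ℝ) : 0 ≤ frob A := Real.sqrt_nonneg _

lemma frob_transpose (A : Matrix (Fin m) (Fin n) ℝ) : frob Aᵀ = frob A := by
  rw [frob, frob, Finset.sum_comm]
  rfl

lemma evnorm_single (i : Fin n) (a : ℝ) : evnorm (Pi.single i a) = |a| := by
  rw [evnorm, ← Real.sqrt_sq_eq_abs]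
  congr 1
  simp [Pi.single_apply, apply_ite (· ^ 2 : ℝ → ℝ)]

lemma evnorm_mulVec_le (A : Matrix (Fin m) (Fin n) ℝ) (x : Fin n → ℝ) :
    evnorm (A *ᵥ x) ≤ frob A * evnorm x := by
  rw [evnorm, evnorm, frob, ← Real.sqrt_mul (by positivity), Finset.sum_mul]
  refine Real.sqrt_le_sqrt <| Finset.sum_le_sum fun i _ => ?_
  simpa only [mulVec, dotProduct] using Finset.sum_mul_sq_le_sq_mul_sq _ (A i) x

lemma spec_le {A : Matrix (Fin m) (Fin n) ℝ} {C : ℝ} (hC : 0 ≤ C)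
    (h : ∀ x, evnorm x ≤ 1 → evnorm (A *ᵥ x) ≤ C) : spec A ≤ C :=
  Real.sSup_le (by rintro r ⟨x, hx, rfl⟩; exact h x hx) hC

lemma evnorm_mulVec_le_frob {A : Matrix (Fin m) (Fin n) ℝ} {x : Fin n → ℝ} (hx : evnorm x ≤ 1) :
    evnorm (A *ᵥ x) ≤ frob A :=
  (evnorm_mulVec_le A x).trans (mul_le_of_le_one_right (frob_nonneg A) hx)

lemma le_spec (A : Matrix (Fin m) (Fin n) ℝ) {x : Fin n → ℝ} (hx : evnorm x ≤ 1) :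
    evnorm (A *ᵥ x) ≤ spec A :=
  le_csSup ⟨frob A, by rintro r ⟨y, hy, rfl⟩; exact evnorm_mulVec_le_frob hy⟩ ⟨x, hx, rfl⟩

lemma spec_le_frob (A : Matrix (Fin m) (Fin n) ℝ) : spec A ≤ frob A :=
  spec_le (frob_nonneg A) fun _ => evnorm_mulVec_le_frob

lemma spec_diagonal_le {d : Fin n → ℝ} {C : ℝ} (hC : 0 ≤ C) (h : ∀ i, |d i| ≤ C) :
    spec (diagonal d) ≤ C := by
  refine spec_le hC fun x hx => ?_
  have hsq : ∑ i, (d i * x i) ^ 2 ≤ C ^ 2 * ∑ i, x i ^ 2 := by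
    rw [Finset.mul_sum]
    refine Finset.sum_le_sum fun i _ => ?_
    rw [mul_pow, ← sq_abs (d i)]
    gcongr
    exact h i
  calc evnorm (diagonal d *ᵥ x) ≤ √(C ^ 2 * ∑ i, x i ^ 2) := by
        simpa only [evnorm, mulVec_diagonal] using Real.sqrt_le_sqrt hsq
    _ = C * evnorm x := by rw [Real.sqrt_mul (sq_nonneg C), Real.sqrt_sq hC, evnorm]
    _ ≤ C := mul_le_of_le_one_right hC hx

lemma abs_le_spec_diagonal (d : Fin n → ℝ) (i : Fin n) : |d i| ≤ spec (diagonal d) := by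
  have := le_spec (diagonal d) (x := Pi.single i 1) (by rw [evnorm_single, abs_one])
  rwa [diagonal_mulVec_single, mul_one, evnorm_single] at this

lemma frob_le_sqrt_of_entry_le {A : Matrix (Fin m) (Fin n) ℝ} {c : ℝ} (h₀ : ∀ i j, 0 ≤ A i j)
    (hc : ∀ i j, A i j ≤ c) (hsum : ∑ i, ∑ j, A i j = 1) : frob A ≤ √c := by
  refine Real.sqrt_le_sqrt ?_
  calc ∑ i, ∑ j, A i j ^ 2 ≤ ∑ i, ∑ j, c * A i j := by
        gcongr with i _ j _
        rw [sq]
        exact mul_le_mul_of_nonneg_right (hc i j) (h₀ i j)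
    _ = c := by simp only [← Finset.mul_sum, hsum, mul_one]

end SpectralNorm

lemma sum_single {ι m n α : Type*} [DecidableEq m] [DecidableEq n] [AddCommMonoid α]
    (s : Finset ι) (i : m) (j : n) (f : ι → α) :
    ∑ x ∈ s, single i j (f x) = single i j (∑ x ∈ s, f x) :=
  (map_sum (singleAddMonoidHom i j) f s).symm

lemma mip_single_one {m n : ℕ} (A : Matrix (Fin m) (Fin n) ℝ) (j : Fin m) (k : Fin n) :
    mip A (single j k 1) = A j k := by
  simp [mip, trace, mul_apply, single_apply, ite_and]

lemma frob_single_one {m n : ℕ} (j : Fin m) (k : Fin n) : frob (single j k (1 : ℝ)) = 1 := by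
  simp [frob, single_apply, ite_and, apply_ite (· ^ 2 : ℝ → ℝ)]

lemma rank_single_one_le {m n : ℕ} (j : Fin m) (k : Fin n) : (single j k (1 : ℝ)).rank ≤ 1 := by
  rw [single_eq_single_vecMulVec_single]
  exact rank_vecMulVec_le _ _

section BasisSupported

variable {m₁ m₂ : ℕ} (P : Measure (Matrix (Fin m₁) (Fin m₂) ℝ))

def basisProb (j : Fin m₁) (k : Fin m₂) : ℝ := P.real {single j k 1}

lemma basisProb_nonneg (j : Fin m₁) (k : Fin m₂) : 0 ≤ basisProb P j k := measureReal_nonneg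

lemma single_one_injective :
    Function.Injective fun p : Fin m₁ × Fin m₂ => single p.1 p.2 (1 : ℝ) := by
  rintro ⟨j, k⟩ ⟨j', k'⟩ h
  have := congrFun (congrFun h j) k
  simp only [single_apply, and_self, if_true] at this
  split_ifs at this with hjk
  · rw [hjk.1, hjk.2]
  · exact absurd this one_ne_zero

lemma coe_image_univ_single :
    ((Finset.univ.image fun p : Fin m₁ × Fin m₂ => single p.1 p.2 (1 : ℝ)) :
      Set (Matrix (Fin m₁) (Fin m₂) ℝ)) = mcBasis m₁ m₂ := by
  ext M
  simp [mcBasis, eq_comm]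

variable {P} [IsProbabilityMeasure P]

lemma integral_eq_sum_basisProb (hsupp : P (mcBasis m₁ m₂) = 1) {E : Type*}
    [NormedAddCommGroup E] [NormedSpace ℝ E] [CompleteSpace E]
    (f : Matrix (Fin m₁) (Fin m₂) ℝ → E) :
    ∫ M, f M ∂P = ∑ j, ∑ k, basisProb P j k • f (single j k 1) := by
  have hae : ∀ᵐ M ∂P, M ∈ mcBasis m₁ m₂ := by
    rw [ae_mem_iff_measure_eq (coe_image_univ_single ▸ Finset.nullMeasurableSet _), hsupp,
      measure_univ]
  rw [← coe_image_univ_single] at hae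
  rw [integral_eq_sum_of_ae_mem_finset hae, Finset.sum_image single_one_injective.injOn,
    Fintype.sum_prod_type]
  rfl

lemma sum_basisProb (hsupp : P (mcBasis m₁ m₂) = 1) : ∑ j, ∑ k, basisProb P j k = 1 := by
  simpa using (integral_eq_sum_basisProb hsupp fun _ => (1 : ℝ)).symm

lemma nl2sqPi_eq_sum (hsupp : P (mcBasis m₁ m₂) = 1) (B : Matrix (Fin m₁) (Fin m₂) ℝ) :
    nl2sqPi P B = ∑ j, ∑ k, basisProb P j k * B j k ^ 2 := by
  simp only [nl2sqPi, ipL2Pi, integral_eq_sum_basisProb hsupp, mip_single_one, smul_eq_mul, sq]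

lemma nl2sqPi_single_one (hsupp : P (mcBasis m₁ m₂) = 1) (j : Fin m₁) (k : Fin m₂) :
    nl2sqPi P (single j k 1) = basisProb P j k := by
  simp [nl2sqPi_eq_sum hsupp, single_apply, ite_and]

lemma nl2sqPi_le_frob_sq (hsupp : P (mcBasis m₁ m₂) = 1) (B : Matrix (Fin m₁) (Fin m₂) ℝ) :
    nl2sqPi P B ≤ frob B ^ 2 := by
  rw [nl2sqPi_eq_sum hsupp, frob, Real.sq_sqrt (by positivity)]
  gcongr with j _ k _
  exact mul_le_of_le_one_left (sq_nonneg _) measureReal_le_one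

lemma kappa1Pi_le_sqrt_basisProb (hsupp : P (mcBasis m₁ m₂) = 1) (j : Fin m₁) (k : Fin m₂) :
    kappa1Pi P ≤ √(basisProb P j k) :=
  csInf_le ⟨0, by rintro r ⟨B, -, -, rfl⟩; exact Real.sqrt_nonneg _⟩
    ⟨single j k 1, frob_single_one j k, rank_single_one_le j k, by rw [nl2sqPi_single_one hsupp]⟩

lemma sqrt_basisProb_le_kappa1'Pi (hsupp : P (mcBasis m₁ m₂) = 1) (j : Fin m₁) (k : Fin m₂) :
    √(basisProb P j k) ≤ kappa1'Pi P := by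
  refine le_csSup ⟨1, ?_⟩
    ⟨single j k 1, frob_single_one j k, rank_single_one_le j k, by rw [nl2sqPi_single_one hsupp]⟩
  rintro r ⟨B, hB, -, rfl⟩
  simpa [hB] using nl2sqPi_le_frob_sq hsupp B

lemma mEPi_eq_sum (hsupp : P (mcBasis m₁ m₂) = 1) {k l : ℕ}
    (f : Matrix (Fin m₁) (Fin m₂) ℝ → Matrix (Fin k) (Fin l) ℝ) :
    mEPi P f = ∑ j, ∑ k, basisProb P j k • f (single j k 1) := by
  ext a b
  simp only [mEPi, integral_eq_sum_basisProb hsupp, Matrix.sum_apply, Matrix.smul_apply,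
    smul_eq_mul]

lemma mEPi_id (hsupp : P (mcBasis m₁ m₂) = 1) : mEPi P (fun M => M) = of (basisProb P) := by
  simp only [mEPi_eq_sum hsupp, smul_single, smul_eq_mul, mul_one, sum_sum_single]

lemma mEPi_mul_transpose (hsupp : P (mcBasis m₁ m₂) = 1) :
    mEPi P (fun M => M * Mᵀ) = diagonal fun j => ∑ k, basisProb P j k := by
  simp only [mEPi_eq_sum hsupp, transpose_single, single_mul_single_same, mul_one, smul_single,
    smul_eq_mul, sum_single, sum_single_eq_diagonal]

lemma mEPi_transpose_mul (hsupp : P (mcBasis m₁ m₂) = 1) :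
    mEPi P (fun M => Mᵀ * M) = diagonal fun k => ∑ j, basisProb P j k := by
  rw [mEPi_eq_sum hsupp, Finset.sum_comm]
  simp only [transpose_single, single_mul_single_same, mul_one, smul_single,
    smul_eq_mul, sum_single, sum_single_eq_diagonal]

lemma basisProb_mem_Icc (hsupp : P (mcBasis m₁ m₂) = 1) {a b : ℝ} (hb : 0 ≤ b)
    (hκ : √a ≤ kappa1Pi P) (hκ' : kappa1'Pi P ≤ √b) (j : Fin m₁) (k : Fin m₂) :
    basisProb P j k ∈ Set.Icc a b :=
  ⟨(Real.sqrt_le_sqrt_iff (basisProb_nonneg P j k)).1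
      (hκ.trans (kappa1Pi_le_sqrt_basisProb hsupp j k)),
    (Real.sqrt_le_sqrt_iff hb).1 ((sqrt_basisProb_le_kappa1'Pi hsupp j k).trans hκ')⟩

end BasisSupported

lemma sum_mem_Icc_div {m n : ℕ} (hn : 0 < n) {p : Fin n → ℝ} {c c' : ℝ}
    (h : ∀ k, p k ∈ Set.Icc (c / (m * n)) (c' / (m * n))) :
    ∑ k, p k ∈ Set.Icc (c / m) (c' / m) := by
  have hdiv (x : ℝ) : Fintype.card (Fin n) • (x / (m * n)) = x / m := by
    rw [Fintype.card_fin, nsmul_eq_mul]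
    field_simp
  constructor
  · rw [← hdiv, ← Finset.card_univ]
    exact Finset.card_nsmul_le_sum _ _ _ fun k _ => (h k).1
  · rw [← hdiv, ← Finset.card_univ]
    exact Finset.sum_le_card_nsmul _ _ _ fun k _ => (h k).2

lemma div_min_le_max_spec_diagonal {m n : ℕ} (hm : 0 < m) (hn : 0 < n) {c : ℝ} {d : Fin m → ℝ}
    {e : Fin n → ℝ} (hd : ∀ i, c / m ≤ d i) (he : ∀ k, c / n ≤ e k) :
    c / (min m n : ℕ) ≤ max (spec (diagonal d)) (spec (diagonal e)) := by
  rcases le_total m n with h | h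
  · rw [min_eq_left h]
    exact ((hd ⟨0, hm⟩).trans ((le_abs_self _).trans (abs_le_spec_diagonal d _))).trans
      (le_max_left _ _)
  · rw [min_eq_right h]
    exact ((he ⟨0, hn⟩).trans ((le_abs_self _).trans (abs_le_spec_diagonal e _))).trans
      (le_max_right _ _)

lemma max_spec_diagonal_le_div_min {m n : ℕ} (hm : 0 < m) (hn : 0 < n) {c : ℝ} (hc : 0 ≤ c)
    {d : Fin m → ℝ} {e : Fin n → ℝ} (hd₀ : ∀ i, 0 ≤ d i) (hd : ∀ i, d i ≤ c / m)
    (he₀ : ∀ k, 0 ≤ e k) (he : ∀ k, e k ≤ c / n) :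
    max (spec (diagonal d)) (spec (diagonal e)) ≤ c / (min m n : ℕ) := by
  have hmin : (0 : ℝ) < (min m n : ℕ) := by exact_mod_cast lt_min hm hn
  have hle {l : ℕ} (hl : min m n ≤ l) : c / l ≤ c / (min m n : ℕ) :=
    div_le_div_of_nonneg_left hc hmin (by exact_mod_cast hl)
  refine max_le (spec_diagonal_le (by positivity) fun i => ?_)
    (spec_diagonal_le (by positivity) fun k => ?_)
  · exact (abs_of_nonneg (hd₀ i)).trans_le ((hd i).trans (hle (min_le_left m n)))
  · exact (abs_of_nonneg (he₀ k)).trans_le ((he k).trans (hle (min_le_right m n)))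

theorem moment_bounds_general {m₁ m₂ : ℕ} (hm₁ : 0 < m₁) (hm₂ : 0 < m₂)
    (Pdist : Measure (Matrix (Fin m₁) (Fin m₂) ℝ)) [IsProbabilityMeasure Pdist]
    (hsupp : Pdist (mcBasis m₁ m₂) = 1)
    (c₁ c₁' : ℝ) (hc₁ : 0 < c₁) (hc₁₁' : c₁ ≤ c₁')
    (hκlow : Real.sqrt (c₁ / (m₁ * m₂)) ≤ kappa1Pi Pdist)
    (hκup : kappa1'Pi Pdist ≤ Real.sqrt (c₁' / (m₁ * m₂))) :
    max (spec (mEPi Pdist (fun M => M))) (spec ((mEPi Pdist (fun M => M))ᵀ)) ≤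
        Real.sqrt (c₁' / (m₁ * m₂)) ∧
      c₁ / (min m₁ m₂ : ℕ) ≤
        max (spec (mEPi Pdist (fun M => M * Mᵀ))) (spec (mEPi Pdist (fun M => Mᵀ * M))) ∧
      max (spec (mEPi Pdist (fun M => M * Mᵀ))) (spec (mEPi Pdist (fun M => Mᵀ * M))) ≤
        c₁' / (min m₁ m₂ : ℕ) := by
  have hc₁' : 0 ≤ c₁' := hc₁.le.trans hc₁₁'
  have hπ := basisProb_mem_Icc hsupp (by positivity) hκlow hκup
  have hrow (j : Fin m₁) := sum_mem_Icc_div hm₂ (hπ j)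
  have hcol (k : Fin m₂) := sum_mem_Icc_div (m := m₂) hm₁ (p := fun j => basisProb Pdist j k)
    fun j => by rw [mul_comm]; exact hπ j k
  have hfrob : frob (mEPi Pdist fun M => M) ≤ √(c₁' / (m₁ * m₂)) := by
    rw [mEPi_id hsupp]
    exact frob_le_sqrt_of_entry_le (basisProb_nonneg Pdist) (fun j k => (hπ j k).2)
      (sum_basisProb hsupp)
  rw [mEPi_mul_transpose hsupp, mEPi_transpose_mul hsupp]
  exact ⟨max_le ((spec_le_frob _).trans hfrob) ((spec_le_frob _).trans (frob_transpose _ ▸ hfrob)),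
    div_min_le_max_spec_diagonal hm₁ hm₂ (fun j => (hrow j).1) (fun k => (hcol k).1),
    max_spec_diagonal_le_div_min hm₁ hm₂ hc₁'
      (fun j => Finset.sum_nonneg fun k _ => basisProb_nonneg Pdist j k) (fun j => (hrow j).2)
      (fun k => Finset.sum_nonneg fun j _ => basisProb_nonneg Pdist j k) (fun k => (hcol k).2)⟩

/-- Equation (5.2): bounds on `‖E(X)‖_∞` and on
`σ_X² = max{‖E(XXᵀ)‖_∞, ‖E(XᵀX)‖_∞}` under Assumption 3. -/
theorem moment_bounds {m₁ m₂ : ℕ} (hm₁ : 0 < m₁) (hm₂ : 0 < m₂)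
    (Pdist : Measure (Matrix (Fin m₁) (Fin m₂) ℝ)) [IsProbabilityMeasure Pdist]
    (hsupp : Pdist (mcBasis m₁ m₂) = 1)
    (c₁ c₁' : ℝ) (hc₁ : 0 < c₁) (hc₁₁' : c₁ ≤ c₁')
    (hκlow : Real.sqrt (c₁ / (m₁ * m₂)) ≤ kappa1Pi Pdist)
    (hκmid : kappa1Pi Pdist ≤ kappa1'Pi Pdist)
    (hκup : kappa1'Pi Pdist ≤ Real.sqrt (c₁' / (m₁ * m₂))) :
    max (spec (mEPi Pdist (fun M => M))) (spec ((mEPi Pdist (fun M => M))ᵀ)) ≤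
        Real.sqrt (c₁' / (m₁ * m₂)) ∧
      c₁ / (min m₁ m₂ : ℕ) ≤
        max (spec (mEPi Pdist (fun M => M * Mᵀ))) (spec (mEPi Pdist (fun M => Mᵀ * M))) ∧
      max (spec (mEPi Pdist (fun M => M * Mᵀ))) (spec (mEPi Pdist (fun M => Mᵀ * M))) ≤
        c₁' / (min m₁ m₂ : ℕ) :=
  moment_bounds_general hm₁ hm₂ Pdist hsupp c₁ c₁' hc₁ hc₁₁' hκlow hκup

end MC
end
end
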